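/- Let N ≥ 3, let A ∈ ℝ^{N×N} be symmetric with eigenvalues λ₁(A) ≥ λ₂(A) ≥ … ≥ λ_N(A), and let W be the span of two orthonormal eigenvectors of A associated with λ₁(A) and λ₂(A). Let v ∈ ℝ^N have all entries in {+1/√N, −1/√N}, let u ∈ ℝ^N be a unit vector with ⟨u, v⟩ = 0, assume P_W u ≠ 0, and let w ∈ W be a unit vector with ⟨w, P_W u⟩ = 0 and ⟨w, v⟩ ≥ 0. Then for any λ, μ > λ₃(A): (1/4)·‖(1/√N)·sgn(w) − v‖² ≤ 8·( ‖Au − λu‖²/(λ − λ₃(A))² + ‖Av − μv‖²/(μ − λ₃(A))² ), where sgn is applied entrywise with sgn(x) = 1 for x ≥ 0 and sgn(x) = −1 for x < 0. -/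

import Mathlib

/-!
Expand everything in the orthonormal eigenbasis, with head `{0, 1}` (spanning `W`) and tail the
remaining indices. Since every tail eigenvalue is at most `λ₃`, the tail masses `Du` of `u` and
`Dv` of `v` are bounded by the two residual terms. In the plane `W` the vectors `P_W u` and
`P_W v - ⟨w, v⟩ w` are both orthogonal to `w`, hence parallel; together with `⟨u, v⟩ = 0` and
Cauchy–Schwarz on the tail this gives `(1 - c²)(1 - Du) ≤ Dv` for `c = ⟨w, v⟩`. Entrywise,
`c² ((1/√N) sgn wᵢ - vᵢ)² ≤ 4 (wᵢ - c vᵢ)²`, so `c² S ≤ 4 (1 - c²)` with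
`S = ‖(1/√N) sgn w - v‖² ≤ 4`. If `Du + Dv` is small, `c²` is close to `1` and `S = O(Dv)`;
otherwise the trivial bound `S ≤ 4` suffices.
-/

open scoped RealInnerProductSpace

/-- Entrywise sign vector: `sgn(x) = 1` if `x ≥ 0`, and `−1` if `x < 0`. -/
noncomputable def sgnVec {N : ℕ} (x : EuclideanSpace ℝ (Fin N)) : EuclideanSpace ℝ (Fin N) :=
  WithLp.toLp 2 (fun i => if 0 ≤ x i then 1 else -1)

theorem one_sub_sq_mul_one_sub_le {ua ub va vb w0 w1 Du Dv Cc : ℝ}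
    (hu : ua ^ 2 + ub ^ 2 + Du = 1) (hv : va ^ 2 + vb ^ 2 + Dv = 1)
    (huv : ua * va + ub * vb + Cc = 0) (hw : w0 ^ 2 + w1 ^ 2 = 1) (hwu : w0 * ua + w1 * ub = 0)
    (hCS : Cc ^ 2 ≤ Du * Dv) :
    (1 - (w0 * va + w1 * vb) ^ 2) * (1 - Du) ≤ Dv := by
  have hv_perp : 1 - (w0 * va + w1 * vb) ^ 2 = (w1 * va - w0 * vb) ^ 2 + Dv := by
    linear_combination -(va ^ 2 + vb ^ 2) * hw - hv
  -- `(ua, ub)` is orthogonal to the unit vector `(w0, w1)`, hence a multiple of `(-w1, w0)`.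
  have hu_perp : (w1 * va - w0 * vb) ^ 2 * (ua ^ 2 + ub ^ 2) = (ua * va + ub * vb) ^ 2 := by
    obtain ⟨σ, rfl, rfl⟩ : ∃ σ : ℝ, ua = -σ * w1 ∧ ub = σ * w0 :=
      ⟨ub * w0 - ua * w1, by linear_combination w0 * hwu - ua * hw,
        by linear_combination w1 * hwu - ub * hw⟩
    linear_combination (w1 * va - w0 * vb) ^ 2 * σ ^ 2 * hw
  calc (1 - (w0 * va + w1 * vb) ^ 2) * (1 - Du)
      = Cc ^ 2 + Dv * (1 - Du) := by
        rw [hv_perp, add_mul, ← hu, add_sub_cancel_right, hu_perp,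
          show ua * va + ub * vb = -Cc by linarith, neg_sq]
    _ ≤ Du * Dv + Dv * (1 - Du) := by gcongr
    _ = Dv := by ring

theorem Orthonormal.inner_eq_zero_of_mem_span_image {ι E : Type*} [NormedAddCommGroup E]
    [InnerProductSpace ℝ E] {v : ι → E} (hv : Orthonormal ℝ v) {s : Set ι} {k : ι} (hk : k ∉ s)
    {w : E} (hw : w ∈ Submodule.span ℝ (v '' s)) : ⟪v k, w⟫ = 0 := by
  have hspan : Submodule.span ℝ (v '' s) ≤ LinearMap.ker (innerₛₗ ℝ (v k)) := by
    rw [Submodule.span_le]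
    rintro _ ⟨j, hj, rfl⟩
    exact hv.2 (ne_of_mem_of_not_mem hj hk).symm
  exact hspan hw

namespace OrthonormalBasis

variable {ι E : Type*} [Fintype ι] [NormedAddCommGroup E] [InnerProductSpace ℝ E]
  (b : OrthonormalBasis ι ℝ E)

theorem inner_apply_of_apply_eq_smul {T : E →ₗ[ℝ] E} {ev : ι → ℝ}
    (hT : ∀ i, T (b i) = ev i • b i) (i : ι) (x : E) : ⟪b i, T x⟫ = ev i * ⟪b i, x⟫ := by
  classical
  conv_lhs => rw [← b.sum_repr' x]
  simp [map_sum, hT, inner_sum, inner_smul_right, orthonormal_iff_ite.mp b.orthonormal, mul_comm]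

theorem sum_inner_sq_le_norm_sub_smul_sq_div {T : E →ₗ[ℝ] E} {ev : ι → ℝ}
    (hT : ∀ i, T (b i) = ev i • b i) {s : Finset ι} {κ t : ℝ} (hs : ∀ i ∈ s, ev i ≤ κ)
    (ht : κ < t) (x : E) : ∑ i ∈ s, ⟪b i, x⟫ ^ 2 ≤ ‖T x - t • x‖ ^ 2 / (t - κ) ^ 2 := by
  have hcoord (i : ι) : ⟪b i, T x - t • x⟫ = (ev i - t) * ⟪b i, x⟫ := by
    rw [inner_sub_right, real_inner_smul_right, b.inner_apply_of_apply_eq_smul hT]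
    ring
  rw [le_div_iff₀' (pow_pos (sub_pos.2 ht) 2)]
  calc (t - κ) ^ 2 * ∑ i ∈ s, ⟪b i, x⟫ ^ 2
      ≤ ∑ i ∈ s, (ev i - t) ^ 2 * ⟪b i, x⟫ ^ 2 := by
        rw [Finset.mul_sum]
        exact Finset.sum_le_sum fun i hi =>
          mul_le_mul_of_nonneg_right (by nlinarith [hs i hi]) (sq_nonneg _)
    _ ≤ ∑ i, (ev i - t) ^ 2 * ⟪b i, x⟫ ^ 2 :=
        Finset.sum_le_sum_of_subset_of_nonneg (Finset.subset_univ s) fun _ _ _ => by positivity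
    _ = ‖T x - t • x‖ ^ 2 := by
        simp_rw [← b.sum_sq_norm_inner_right (T x - t • x), hcoord, Real.norm_eq_abs, sq_abs,
          mul_pow]

theorem inner_eq_add_add_sum_compl [DecidableEq ι] {i j : ι} (hij : i ≠ j) (x y : E) :
    ⟪x, y⟫ = ⟪b i, x⟫ * ⟪b i, y⟫ + ⟪b j, x⟫ * ⟪b j, y⟫ +
      ∑ k ∈ ({i, j} : Finset ι)ᶜ, ⟪b k, x⟫ * ⟪b k, y⟫ := by
  rw [← b.sum_inner_mul_inner, ← Finset.sum_add_sum_compl {i, j}, Finset.sum_pair hij]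
  simp_rw [real_inner_comm x]

theorem one_sub_inner_sq_mul_le [DecidableEq ι] {i j : ι} (hij : i ≠ j) {u v w : E}
    (hu : ‖u‖ = 1) (hv : ‖v‖ = 1) (huv : ⟪u, v⟫ = 0) (hw : ‖w‖ = 1) (hwu : ⟪w, u⟫ = 0)
    (hw_tail : ∀ k ∈ ({i, j} : Finset ι)ᶜ, ⟪b k, w⟫ = 0) :
    (1 - ⟪w, v⟫ ^ 2) * (1 - ∑ k ∈ ({i, j} : Finset ι)ᶜ, ⟪b k, u⟫ ^ 2) ≤
      ∑ k ∈ ({i, j} : Finset ι)ᶜ, ⟪b k, v⟫ ^ 2 := by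
  have hnorm (x : E) (hx : ‖x‖ = 1) :
      ⟪b i, x⟫ ^ 2 + ⟪b j, x⟫ ^ 2 + ∑ k ∈ ({i, j} : Finset ι)ᶜ, ⟪b k, x⟫ ^ 2 = 1 := by
    simpa only [← sq, real_inner_self_eq_norm_sq, hx, one_pow] using
      (b.inner_eq_add_add_sum_compl hij x x).symm
  have hw_head (y : E) : ⟪w, y⟫ = ⟪b i, w⟫ * ⟪b i, y⟫ + ⟪b j, w⟫ * ⟪b j, y⟫ := by
    rw [b.inner_eq_add_add_sum_compl hij, Finset.sum_eq_zero fun k hk => by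
      rw [hw_tail k hk, zero_mul], add_zero]
  rw [hw_head v]
  refine one_sub_sq_mul_one_sub_le (hnorm u hu) (hnorm v hv)
    ((b.inner_eq_add_add_sum_compl hij u v).symm.trans huv) ?_ ((hw_head u).symm.trans hwu)
    (Finset.sum_mul_sq_le_sq_mul_sq _ _ _)
  simpa only [← sq, real_inner_self_eq_norm_sq, hw, one_pow] using (hw_head w).symm

end OrthonormalBasis

theorem cast_mul_inv_sqrt_sq {N : ℕ} (hN : N ≠ 0) : (N : ℝ) * (Real.sqrt N)⁻¹ ^ 2 = 1 := by
  rw [inv_pow, Real.sq_sqrt (Nat.cast_nonneg N)]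
  exact mul_inv_cancel₀ (Nat.cast_ne_zero.2 hN)

theorem norm_sub_inner_smul_sq {E : Type*} [NormedAddCommGroup E] [InnerProductSpace ℝ E]
    {v w : E} (hw : ‖w‖ = 1) (hv : ‖v‖ = 1) : ‖w - ⟪w, v⟫ • v‖ ^ 2 = 1 - ⟪w, v⟫ ^ 2 := by
  rw [norm_sub_sq_real, real_inner_smul_right, norm_smul, hw, hv, Real.norm_eq_abs, mul_one,
    sq_abs]
  ring

theorem sq_mul_sq_sgn_sub_le {c r a x : ℝ} (hc : 0 ≤ c) (hr : 0 ≤ r) (hx : x = r ∨ x = -r) :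
    c ^ 2 * (r * (if 0 ≤ a then 1 else -1) - x) ^ 2 ≤ 4 * (a - c * x) ^ 2 := by
  have hcr : 0 ≤ c * r := mul_nonneg hc hr
  split_ifs <;> rcases hx with rfl | rfl <;> nlinarith

section SignVector

variable {N : ℕ} {r : ℝ} {v : EuclideanSpace ℝ (Fin N)}

theorem norm_sq_eq_of_forall_eq_or_eq_neg (hv : ∀ i, v i = r ∨ v i = -r) :
    ‖v‖ ^ 2 = N * r ^ 2 := by
  have hvi (i : Fin N) : v i ^ 2 = r ^ 2 := by
    rcases hv i with h | h <;> simp [h]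
  simp [EuclideanSpace.norm_sq_eq, hvi]

theorem norm_smul_sgnVec_sub_sq_le (hv : ∀ i, v i = r ∨ v i = -r)
    (w : EuclideanSpace ℝ (Fin N)) : ‖r • sgnVec w - v‖ ^ 2 ≤ 4 * (N * r ^ 2) := by
  have hentry (i : Fin N) : ‖(r • sgnVec w - v) i‖ ^ 2 ≤ 4 * r ^ 2 := by
    simp only [sgnVec, PiLp.sub_apply, PiLp.smul_apply, smul_eq_mul, Real.norm_eq_abs, sq_abs]
    split_ifs <;> rcases hv i with h | h <;> rw [h] <;> nlinarith
  calc ‖r • sgnVec w - v‖ ^ 2 ≤ ∑ _i : Fin N, 4 * r ^ 2 := by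
        rw [EuclideanSpace.norm_sq_eq]
        exact Finset.sum_le_sum fun i _ => hentry i
    _ = 4 * (N * r ^ 2) := by
        simp only [Finset.sum_const, Finset.card_univ, Fintype.card_fin, nsmul_eq_mul]
        ring

theorem sq_mul_norm_smul_sgnVec_sub_sq_le (hr : 0 ≤ r) (hv : ∀ i, v i = r ∨ v i = -r)
    {c : ℝ} (hc : 0 ≤ c) (w : EuclideanSpace ℝ (Fin N)) :
    c ^ 2 * ‖r • sgnVec w - v‖ ^ 2 ≤ 4 * ‖w - c • v‖ ^ 2 := by
  simp only [EuclideanSpace.norm_sq_eq, Finset.mul_sum, Real.norm_eq_abs, sq_abs]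
  refine Finset.sum_le_sum fun i _ => ?_
  simpa [sgnVec] using sq_mul_sq_sgn_sub_le (a := w i) hc hr (hv i)

end SignVector

theorem one_div_four_mul_le_eight_mul_add {S c Du Dv X Y : ℝ} (hS4 : S ≤ 4)
    (hsgn : c ^ 2 * S ≤ 4 * (1 - c ^ 2)) (hhead : (1 - c ^ 2) * (1 - Du) ≤ Dv)
    (hDu : 0 ≤ Du) (hDv : 0 ≤ Dv) (hDuX : Du ≤ X) (hDvY : Dv ≤ Y) :
    1 / 4 * S ≤ 8 * (X + Y) := by
  rcases le_or_gt (1 / 8) (X + Y) with hbig | hsmall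
  · linarith
  have hc : 1 - c ^ 2 ≤ 8 / 7 * Dv := by nlinarith
  have hS' : S ≤ 16 / 3 * Dv := by nlinarith
  linarith

/-- Let `A ∈ ℝ^{N×N}` (`N ≥ 3`) be symmetric with eigenvalues
`λ₁(A) ≥ … ≥ λ_N(A)` (encoded by an orthonormal eigenbasis `B` and antitone sequence `ev`),
and `W` the span of eigenvectors associated with `λ₁(A)`, `λ₂(A)`.  Let `v` have entries
`±1/√N`, `u` a unit vector with `⟨u,v⟩ = 0`, `P_W u ≠ 0`, and `w ∈ W` a unit vector with
`⟨w, P_W u⟩ = 0` and `⟨w, v⟩ ≥ 0`.  Then for any `λ, μ > λ₃(A)`: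
`(1/4)·‖(1/√N)·sgn(w) − v‖² ≤ 8·( ‖Au − λu‖²/(λ−λ₃)² + ‖Av − μv‖²/(μ−λ₃)² )`. -/
theorem statement_13
    (N : ℕ) (hN : 3 ≤ N)
    (A : Matrix (Fin N) (Fin N) ℝ)
    (ev : Fin N → ℝ) (B : Fin N → EuclideanSpace ℝ (Fin N))
    (hev : Antitone ev) (hB : Orthonormal ℝ B)
    (heig : ∀ i, Matrix.toEuclideanLin A (B i) = ev i • B i)
    (W : Submodule ℝ (EuclideanSpace ℝ (Fin N)))
    (hW : W = Submodule.span ℝ (B '' {i : Fin N | (i : ℕ) < 2}))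
    (v u : EuclideanSpace ℝ (Fin N))
    (hv : ∀ i, v i = (Real.sqrt N)⁻¹ ∨ v i = -(Real.sqrt N)⁻¹)
    (hu : ‖u‖ = 1) (huv : ⟪u, v⟫ = 0)
    (w : EuclideanSpace ℝ (Fin N)) (hwW : w ∈ W) (hw : ‖w‖ = 1)
    (hwu : ⟪w, (W.orthogonalProjection u : EuclideanSpace ℝ (Fin N))⟫ = 0)
    (hwv : 0 ≤ ⟪w, v⟫)
    (lam mu : ℝ) (hlam : lam > ev ⟨2, by omega⟩) (hmu : mu > ev ⟨2, by omega⟩) :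
    (1 / 4) * ‖(Real.sqrt N)⁻¹ • sgnVec w - v‖ ^ 2 ≤
      8 * (‖Matrix.toEuclideanLin A u - lam • u‖ ^ 2 / (lam - ev ⟨2, by omega⟩) ^ 2 +
           ‖Matrix.toEuclideanLin A v - mu • v‖ ^ 2 / (mu - ev ⟨2, by omega⟩) ^ 2) := by
  obtain ⟨b, rfl⟩ : ∃ b : OrthonormalBasis (Fin N) ℝ (EuclideanSpace ℝ (Fin N)), ⇑b = B :=
    ⟨.mk hB (hB.linearIndependent.span_eq_top_of_card_eq_finrank' (by simp)).ge,
      OrthonormalBasis.coe_mk _ _⟩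
  set tail : Finset (Fin N) := {⟨0, by omega⟩, ⟨1, by omega⟩}ᶜ
  have two_le_of_mem_tail {k : Fin N} (hk : k ∈ tail) : 2 ≤ (k : ℕ) := by
    simp only [tail, Finset.mem_compl, Finset.mem_insert, Finset.mem_singleton, Fin.ext_iff] at hk
    omega
  have hev_tail (k : Fin N) (hk : k ∈ tail) : ev k ≤ ev ⟨2, by omega⟩ :=
    hev (Fin.le_def.2 (two_le_of_mem_tail hk))
  have hw_tail (k : Fin N) (hk : k ∈ tail) : ⟪b k, w⟫ = 0 :=
    hB.inner_eq_zero_of_mem_span_image (two_le_of_mem_tail hk).not_gt (hW ▸ hwW)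
  have hwu' : ⟪w, u⟫ = 0 := by
    rwa [← W.starProjection_apply, ← W.inner_starProjection_left_eq_right,
      W.starProjection_eq_self_iff.2 hwW] at hwu
  have hNr : (N : ℝ) * (Real.sqrt N)⁻¹ ^ 2 = 1 := cast_mul_inv_sqrt_sq (by omega)
  have hv1 : ‖v‖ = 1 := by
    rw [← pow_left_inj₀ (norm_nonneg v) zero_le_one two_ne_zero, one_pow,
      norm_sq_eq_of_forall_eq_or_eq_neg hv, hNr]
  refine one_div_four_mul_le_eight_mul_add
    ((norm_smul_sgnVec_sub_sq_le hv w).trans_eq (by rw [hNr, mul_one]))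
    ((sq_mul_norm_smul_sgnVec_sub_sq_le (by positivity) hv hwv w).trans_eq
      (by rw [norm_sub_inner_smul_sq hw hv1]))
    (b.one_sub_inner_sq_mul_le (by simp [Fin.ext_iff]) hu hv1 huv hw hwu' hw_tail)
    (Finset.sum_nonneg fun _ _ => sq_nonneg _) (Finset.sum_nonneg fun _ _ => sq_nonneg _)
    (b.sum_inner_sq_le_norm_sub_smul_sq_div heig hev_tail hlam u)
    (b.sum_inner_sq_le_norm_sub_smul_sq_div heig hev_tail hmu v)
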